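/- For all natural numbers n, |B_{p,r,a,m}(n)| = |E_{p,r,a,m}(n)|; that is, the number of partitions of n in which every multiplicity is congruent to ja modulo p for some 0 ≤ j ≤ p − 1 and lies between j(pr + a) and j(pr + a) + p(m − 1), equals the number of partitions of n in which every part divisible by p is not divisible by pm, and every part not divisible by p is congruent to −s(pr + a) modulo p²r + pa for some s ∈ {1, 2, …, p − 1}. -/

import Mathlib

/-!
Write `L = p * r + a`; it is coprime to `p`. A multiplicity lies in one of the windows of the
first family exactly when it is `L * j + p * t` with `j < p` and `t < m`, so a partition of the
first kind is `L` copies of a partition `κ` with all multiplicities `< p` together with `p` copies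
of a partition `μ` with all multiplicities `< m`, where `L * |κ| + p * |μ| = n`. On the other side,
the congruence condition says that the parts prime to `p` are the `L * y` with `p ∤ y`, while the
other condition says that the parts divisible by `p` are the `p * w` with `m ∤ w`; so a partition
of the second kind is a partition `κ'` with all parts scaled by `L` together with a partition `μ'`
with all parts scaled by `p`, where `κ'` has no part divisible by `p` and `μ'` none divisible by
`m`. Glaisher's theorem matches the `κ` with the `κ'` and the `μ` with the
`μ'` of each size.
-/

/-- The coefficient `j < v` of `u` in a representation `c = u * j + v * t`, which is unique when
`u` is coprime to `v`; junk for other `c`. -/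
def coeffLeft (u v c : ℕ) : ℕ := ((c : ZMod v) * (u : ZMod v)⁻¹).val

def coeffRight (u v c : ℕ) : ℕ := (c - u * coeffLeft u v c) / v

@[simp] theorem coeffLeft_zero (u v : ℕ) : coeffLeft u v 0 = 0 := by simp [coeffLeft]

@[simp] theorem coeffRight_zero (u v : ℕ) : coeffRight u v 0 = 0 := by simp [coeffRight]

theorem coeffLeft_mul_add {u v j : ℕ} (huv : u.Coprime v) (hj : j < v) (t : ℕ) :
    coeffLeft u v (u * j + v * t) = j := by
  have hunit : (u : ZMod v) * (u : ZMod v)⁻¹ = 1 := ZMod.coe_mul_inv_eq_one u huv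
  rw [coeffLeft, Nat.cast_add, Nat.cast_mul, Nat.cast_mul, ZMod.natCast_self, zero_mul, add_zero,
    mul_right_comm, hunit, one_mul, ZMod.val_natCast_of_lt hj]

theorem coeffRight_mul_add {u v j : ℕ} (huv : u.Coprime v) (hj : j < v) (t : ℕ) :
    coeffRight u v (u * j + v * t) = t := by
  rw [coeffRight, coeffLeft_mul_add huv hj, Nat.add_sub_cancel_left,
    Nat.mul_div_cancel_left _ (by omega)]

theorem dvd_and_div_iff_exists_mul_eq {u : ℕ} {P : ℕ → Prop} (hu : 0 < u) (i : ℕ) :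
    (u ∣ i ∧ P (i / u)) ↔ ∃ y, P y ∧ u * y = i := by
  constructor
  · rintro ⟨hdvd, hP⟩
    exact ⟨i / u, hP, Nat.mul_div_cancel' hdvd⟩
  · rintro ⟨y, hy, rfl⟩
    exact ⟨dvd_mul_right u y, by rwa [Nat.mul_div_cancel_left y hu]⟩

section Congruences

variable {p L : ℕ}

theorem exists_modEq_window_iff {a m : ℕ} (hp : 0 < p) (hm : 1 ≤ m) (hL : L ≡ a [MOD p])
    (c : ℕ) :
    (∃ j, j ≤ p - 1 ∧ c ≡ j * a [MOD p] ∧ j * L ≤ c ∧ c ≤ j * L + p * (m - 1)) ↔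
      ∃ j < p, ∃ t < m, c = L * j + p * t := by
  constructor
  · rintro ⟨j, hj, hc, hlo, hhi⟩
    obtain ⟨t, ht⟩ := (Nat.modEq_iff_dvd' hlo).1 ((hL.mul_left j).trans hc.symm)
    have htm : p * t ≤ p * (m - 1) := by omega
    refine ⟨j, by omega, t, by have := Nat.le_of_mul_le_mul_left htm hp; omega, ?_⟩
    rw [mul_comm L j]
    omega
  · rintro ⟨j, hj, t, ht, rfl⟩
    refine ⟨j, by omega, ?_, by rw [mul_comm j L]; omega, ?_⟩
    · calc L * j + p * t ≡ L * j + 0 [MOD p] :=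
            Nat.ModEq.add_left _ (Nat.modEq_zero_iff_dvd.2 (dvd_mul_right p t))
        _ ≡ a * j [MOD p] := hL.mul_right j
        _ = j * a := mul_comm a j
    · have : p * t ≤ p * (m - 1) := Nat.mul_le_mul_left p (by omega)
      rw [mul_comm j L]
      omega

theorem exists_modEq_neg_mul_iff (hp : 0 < p) {i : ℕ} (hi : ¬p ∣ i) :
    (∃ s : ℕ, 1 ≤ s ∧ s ≤ p - 1 ∧ (i : ℤ) ≡ -(s * L) [ZMOD p * L]) ↔
      ∃ y, ¬p ∣ y ∧ L * y = i := by
  constructor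
  · rintro ⟨s, -, -, hs⟩
    have hdvd : (L : ℤ) ∣ i + s * L := by
      simpa [neg_sub', sub_neg_eq_add] using ((dvd_mul_left (L : ℤ) p).trans hs.dvd).neg_right
    obtain ⟨y, rfl⟩ := Int.natCast_dvd_natCast.1 ((dvd_add_left (dvd_mul_left _ _)).1 hdvd)
    exact ⟨y, fun hy => hi (dvd_mul_of_dvd_right hy L), rfl⟩
  · rintro ⟨y, hy, rfl⟩
    have hlt : y % p < p := Nat.mod_lt y hp
    have hne : y % p ≠ 0 := fun h => hy (Nat.dvd_of_mod_eq_zero h)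
    have hdiv : ((y % p : ℕ) : ℤ) + p * (y / p : ℕ) = y := by exact_mod_cast Nat.mod_add_div y p
    -- `s = p - y % p` makes `y + s` a multiple of `p`
    refine ⟨p - y % p, by omega, by omega, Int.modEq_iff_dvd.2 ⟨-((y / p : ℕ) + 1), ?_⟩⟩
    rw [Nat.cast_sub hlt.le, Nat.cast_mul]
    linear_combination (L : ℤ) * hdiv

theorem not_mul_dvd_iff {m i : ℕ} (hp : 0 < p) (hi : p ∣ i) :
    ¬p * m ∣ i ↔ ∃ w, ¬m ∣ w ∧ p * w = i := by
  obtain ⟨w, rfl⟩ := hi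
  rw [Nat.mul_dvd_mul_iff_left hp]
  refine ⟨fun hw => ⟨w, hw, rfl⟩, ?_⟩
  rintro ⟨w', hw', h⟩
  rwa [← Nat.eq_of_mul_eq_mul_left hp h]

theorem E_part_iff {a r m : ℕ} (hp : 0 < p) (hco : (p * r + a).Coprime p) (i : ℕ) :
    ((p ∣ i → ¬p * m ∣ i) ∧ (¬p ∣ i → ∃ s, 1 ≤ s ∧ s ≤ p - 1 ∧
        (i : ℤ) ≡ -(s * (p * r + a)) [ZMOD ((p : ℤ) ^ 2 * r + p * a)])) ↔
      (∃ y, ¬p ∣ y ∧ (p * r + a) * y = i) ∨ ∃ w, ¬m ∣ w ∧ p * w = i := by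
  by_cases hpi : p ∣ i
  · have hy : ¬∃ y, ¬p ∣ y ∧ (p * r + a) * y = i := fun ⟨y, hy, h⟩ =>
      hy (hco.symm.dvd_of_dvd_mul_left (h ▸ hpi))
    simp only [hpi, true_implies, not_true_eq_false, false_implies, and_true, hy, false_or]
    exact not_mul_dvd_iff hp hpi
  · have hw : ¬∃ w, ¬m ∣ w ∧ p * w = i := fun ⟨w, _, h⟩ => hpi (h ▸ dvd_mul_right p w)
    have hL : (p : ℤ) * r + a = ((p * r + a : ℕ) : ℤ) := by push_cast; ring
    have hM : (p : ℤ) ^ 2 * r + p * a = p * ((p * r + a : ℕ) : ℤ) := by push_cast; ring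
    simp only [hpi, false_implies, true_and, not_false_eq_true, true_implies, hw, or_false, hL, hM]
    exact exists_modEq_neg_mul_iff hp hpi

end Congruences

namespace Multiset

section MapCount

variable {α : Type*} [DecidableEq α]

noncomputable def mapCount (f : ℕ → ℕ) (hf : f 0 = 0) (s : Multiset α) : Multiset α :=
  Finsupp.toMultiset ((toFinsupp s).mapRange f hf)

@[simp] theorem count_mapCount (f : ℕ → ℕ) (hf : f 0 = 0) (s : Multiset α) (a : α) :
    (s.mapCount f hf).count a = f (s.count a) := by
  simp [mapCount]

theorem mem_of_mem_mapCount {f : ℕ → ℕ} {hf : f 0 = 0} {s : Multiset α} {a : α}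
    (h : a ∈ s.mapCount f hf) : a ∈ s := by
  rw [← count_ne_zero, count_mapCount] at h
  exact count_ne_zero.1 fun h0 => h (h0 ▸ hf)

variable {u v : ℕ}

theorem nsmul_mapCount_coeffLeft_add (huv : u.Coprime v) {s : Multiset α}
    (hs : ∀ a ∈ s, ∃ j < v, ∃ t, s.count a = u * j + v * t) :
    u • s.mapCount (coeffLeft u v) (coeffLeft_zero u v) +
      v • s.mapCount (coeffRight u v) (coeffRight_zero u v) = s := by
  ext a
  simp only [count_add, count_nsmul, count_mapCount]
  by_cases ha : a ∈ s
  · obtain ⟨j, hj, t, hc⟩ := hs a ha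
    rw [hc, coeffLeft_mul_add huv hj, coeffRight_mul_add huv hj]
  · simp [count_eq_zero.2 ha]

theorem mapCount_coeffLeft_nsmul_add (huv : u.Coprime v) {s : Multiset α}
    (hs : ∀ a, s.count a < v) (s' : Multiset α) :
    (u • s + v • s').mapCount (coeffLeft u v) (coeffLeft_zero u v) = s := by
  ext a
  simp only [count_mapCount, count_add, count_nsmul, coeffLeft_mul_add huv (hs a)]

theorem mapCount_coeffRight_nsmul_add (huv : u.Coprime v) {s : Multiset α}
    (hs : ∀ a, s.count a < v) (s' : Multiset α) :
    (u • s + v • s').mapCount (coeffRight u v) (coeffRight_zero u v) = s' := by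
  ext a
  simp only [count_mapCount, count_add, count_nsmul, coeffRight_mul_add huv (hs a)]

end MapCount

theorem sum_map_mul (u : ℕ) (s : Multiset ℕ) : (s.map (u * ·)).sum = u * s.sum := by
  rw [sum_map_mul_left, map_id']

variable {u : ℕ}

theorem map_mul_map_div_cancel {s : Multiset ℕ} (hs : ∀ i ∈ s, u ∣ i) :
    (s.map (· / u)).map (u * ·) = s := by
  rw [map_map]
  exact (map_congr rfl fun i hi => Nat.mul_div_cancel' (hs i hi)).trans (map_id s)

theorem map_div_map_mul_cancel (hu : 0 < u) (s : Multiset ℕ) :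
    (s.map (u * ·)).map (· / u) = s := by
  rw [map_map]
  exact (map_congr rfl fun i _ => Nat.mul_div_cancel_left i hu).trans (map_id s)

theorem mul_sum_map_div_cancel {s : Multiset ℕ} (hs : ∀ i ∈ s, u ∣ i) :
    u * (s.map (· / u)).sum = s.sum := by
  rw [← sum_map_mul, map_mul_map_div_cancel hs]

variable {v : ℕ} {P Q : ℕ → Prop} [DecidablePred P]

theorem filter_map_mul_add_map_mul (hu : 0 < u) (hPQ : ∀ y w, P y → Q w → u * y ≠ v * w)
    {κ μ : Multiset ℕ} (hκ : ∀ y ∈ κ, P y) (hμ : ∀ w ∈ μ, Q w) :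
    (κ.map (u * ·) + μ.map (v * ·)).filter (fun i => u ∣ i ∧ P (i / u)) = κ.map (u * ·) := by
  rw [filter_add, filter_eq_self.2, filter_eq_nil.2, add_zero]
  · simp only [mem_map, dvd_and_div_iff_exists_mul_eq hu]
    rintro _ ⟨w, hw, rfl⟩ ⟨y, hy, hyw⟩
    exact hPQ y w hy (hμ w hw) hyw
  · simp only [mem_map, dvd_and_div_iff_exists_mul_eq hu]
    rintro _ ⟨y, hy, rfl⟩
    exact ⟨y, hκ y hy, rfl⟩

theorem filter_not_map_mul_add_map_mul (hu : 0 < u) (hPQ : ∀ y w, P y → Q w → u * y ≠ v * w)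
    {κ μ : Multiset ℕ} (hκ : ∀ y ∈ κ, P y) (hμ : ∀ w ∈ μ, Q w) :
    (κ.map (u * ·) + μ.map (v * ·)).filter (fun i => ¬(u ∣ i ∧ P (i / u))) = μ.map (v * ·) := by
  rw [filter_add, filter_eq_nil.2, filter_eq_self.2, zero_add]
  · simp only [mem_map, dvd_and_div_iff_exists_mul_eq hu]
    rintro _ ⟨w, hw, rfl⟩ ⟨y, hy, hyw⟩
    exact hPQ y w hy (hμ w hw) hyw
  · simp only [mem_map, dvd_and_div_iff_exists_mul_eq hu, not_not]
    rintro _ ⟨y, hy, rfl⟩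
    exact ⟨y, hκ y hy, rfl⟩

theorem dvd_and_div_of_mem_filter_not [DecidablePred Q] (hu : 0 < u) (hv : 0 < v)
    {s : Multiset ℕ} (hs : ∀ i ∈ s, (∃ y, P y ∧ u * y = i) ∨ ∃ w, Q w ∧ v * w = i) {i : ℕ}
    (hi : i ∈ s.filter fun i => ¬(u ∣ i ∧ P (i / u))) : v ∣ i ∧ Q (i / v) :=
  have ⟨hi, hR⟩ := mem_filter.1 hi
  (dvd_and_div_iff_exists_mul_eq hv i).2 <|
    (hs i hi).resolve_left ((dvd_and_div_iff_exists_mul_eq hu i).not.1 hR)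

end Multiset

namespace Nat.Partition

def WeightedPair (u v n : ℕ) (S T : ∀ k : ℕ, Finset k.Partition) : Type :=
  Σ kl : {kl : ℕ × ℕ // u * kl.1 + v * kl.2 = n}, S kl.1.1 × T kl.1.2

variable {u v n : ℕ} {S T : ∀ k : ℕ, Finset k.Partition}

theorem WeightedPair.ext {x y : WeightedPair u v n S T} (h₁ : x.2.1.1.parts = y.2.1.1.parts)
    (h₂ : x.2.2.1.parts = y.2.2.1.parts) : x = y := by
  obtain ⟨⟨⟨k, l⟩, hkl⟩, ⟨κ, hκ⟩, ⟨μ, hμ⟩⟩ := x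
  obtain ⟨⟨⟨k', l'⟩, hkl'⟩, ⟨κ', hκ'⟩, ⟨μ', hμ'⟩⟩ := y
  obtain rfl : k = k' := κ.parts_sum.symm.trans (h₁ ▸ κ'.parts_sum)
  obtain rfl : l = l' := μ.parts_sum.symm.trans (h₂ ▸ μ'.parts_sum)
  obtain rfl : κ = κ' := Partition.ext h₁
  obtain rfl : μ = μ' := Partition.ext h₂
  rfl

theorem card_weightedPair_congr {S' T' : ∀ k : ℕ, Finset k.Partition}
    (hS : ∀ k, (S k).card = (S' k).card) (hT : ∀ l, (T l).card = (T' l).card) :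
    Nat.card (WeightedPair u v n S T) = Nat.card (WeightedPair u v n S' T') :=
  Nat.card_congr <| Equiv.sigmaCongrRight fun _ =>
    (Finset.equivOfCardEq (hS _)).prodCongr (Finset.equivOfCardEq (hT _))

theorem mem_countRestricted {k : ℕ} {π : k.Partition} :
    π ∈ countRestricted k v ↔ ∀ i ∈ π.parts, π.parts.count i < v := by
  simp [countRestricted]

theorem count_lt_of_mem_countRestricted {k : ℕ} {π : k.Partition} (hv : 0 < v)
    (hπ : π ∈ countRestricted k v) (i : ℕ) : π.parts.count i < v := by
  by_cases hi : i ∈ π.parts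
  · exact mem_countRestricted.1 hπ i hi
  · rwa [Multiset.count_eq_zero.2 hi]

theorem mem_restricted {k : ℕ} {P : ℕ → Prop} [DecidablePred P] {π : k.Partition} :
    π ∈ restricted k P ↔ ∀ i ∈ π.parts, P i := by
  simp [restricted]

noncomputable def mapCount (f : ℕ → ℕ) (hf : f 0 = 0) (π : n.Partition) :
    (π.parts.mapCount f hf).sum.Partition :=
  ⟨π.parts.mapCount f hf, fun hi => π.parts_pos (Multiset.mem_of_mem_mapCount hi), rfl⟩

/-- `π` corresponds to `(κ, μ)` with `π.parts = u • κ.parts + v • μ.parts`. -/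
noncomputable def mixedCountEquiv (huv : u.Coprime v) (hv : 0 < v) {m : ℕ} (hm : 0 < m) :
    {π : n.Partition // ∀ i ∈ π.parts, ∃ j < v, ∃ t < m, π.parts.count i = u * j + v * t} ≃
      WeightedPair u v n (countRestricted · v) (countRestricted · m) where
  toFun π :=
    have hsplit := Multiset.nsmul_mapCount_coeffLeft_add huv fun i hi =>
      (π.2 i hi).imp fun _ ⟨hj, t, _, hc⟩ => ⟨hj, t, hc⟩
    have hlt {i} (hi : i ∈ π.1.parts) :
        coeffLeft u v (π.1.parts.count i) < v ∧ coeffRight u v (π.1.parts.count i) < m := by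
      obtain ⟨j, hj, t, ht, hc⟩ := π.2 i hi
      rw [hc, coeffLeft_mul_add huv hj, coeffRight_mul_add huv hj]
      exact ⟨hj, ht⟩
    ⟨⟨((π.1.parts.mapCount _ (coeffLeft_zero u v)).sum,
        (π.1.parts.mapCount _ (coeffRight_zero u v)).sum), by
      simpa [π.1.parts_sum, Multiset.sum_nsmul] using congrArg Multiset.sum hsplit⟩,
    ⟨π.1.mapCount _ (coeffLeft_zero u v), mem_countRestricted.2 fun i hi => by
      simpa [mapCount] using (hlt (Multiset.mem_of_mem_mapCount hi)).1⟩,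
    ⟨π.1.mapCount _ (coeffRight_zero u v), mem_countRestricted.2 fun i hi => by
      simpa [mapCount] using (hlt (Multiset.mem_of_mem_mapCount hi)).2⟩⟩
  invFun x :=
    have hκ := count_lt_of_mem_countRestricted hv x.2.1.2
    have hμ := count_lt_of_mem_countRestricted hm x.2.2.2
    ⟨⟨u • x.2.1.1.parts + v • x.2.2.1.parts, fun hi => by
      simp only [Multiset.mem_add, Multiset.mem_nsmul] at hi
      exact hi.elim (fun h => x.2.1.1.parts_pos h.2) (fun h => x.2.2.1.parts_pos h.2), by
      simp [Multiset.sum_nsmul, x.2.1.1.parts_sum, x.2.2.1.parts_sum, x.1.2]⟩, fun i _ =>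
      ⟨_, hκ i, _, hμ i, by simp [Multiset.count_nsmul]⟩⟩
  left_inv π := Subtype.ext <| Partition.ext <| Multiset.nsmul_mapCount_coeffLeft_add huv
    fun i hi => (π.2 i hi).imp fun _ ⟨hj, t, _, hc⟩ => ⟨hj, t, hc⟩
  right_inv x := by
    have hκ := count_lt_of_mem_countRestricted hv x.2.1.2
    refine WeightedPair.ext (y := x) ?_ ?_
    · exact Multiset.mapCount_coeffLeft_nsmul_add huv hκ _
    · exact Multiset.mapCount_coeffRight_nsmul_add huv hκ _

def divParts (hu : 0 < u) (s : Multiset ℕ) (hs : ∀ i ∈ s, 0 < i ∧ u ∣ i) :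
    (s.map (· / u)).sum.Partition where
  parts := s.map (· / u)
  parts_pos := by
    simp only [Multiset.mem_map]
    rintro _ ⟨i, hi, rfl⟩
    exact Nat.div_pos (Nat.le_of_dvd (hs i hi).1 (hs i hi).2) hu
  parts_sum := rfl

theorem divParts_mem_restricted {P : ℕ → Prop} [DecidablePred P] (hu : 0 < u) {s : Multiset ℕ}
    (hs : ∀ i ∈ s, 0 < i ∧ u ∣ i) (hP : ∀ i ∈ s, P (i / u)) :
    divParts hu s hs ∈ restricted _ P := by
  simp only [mem_restricted, divParts, Multiset.mem_map]
  rintro _ ⟨i, hi, rfl⟩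
  exact hP i hi

/-- `π` corresponds to `(κ, μ)` with `π.parts = κ.parts.map (u * ·) + μ.parts.map (v * ·)`. -/
noncomputable def scaledPartsEquiv {P Q : ℕ → Prop} [DecidablePred P] [DecidablePred Q]
    (hu : 0 < u) (hv : 0 < v) (hPQ : ∀ y w, P y → Q w → u * y ≠ v * w) :
    {π : n.Partition // ∀ i ∈ π.parts, (∃ y, P y ∧ u * y = i) ∨ ∃ w, Q w ∧ v * w = i} ≃
      WeightedPair u v n (restricted · P) (restricted · Q) where
  toFun π :=
    have hleft : ∀ i ∈ π.1.parts.filter fun i => u ∣ i ∧ P (i / u),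
        (0 < i ∧ u ∣ i) ∧ P (i / u) := fun i hi =>
      have ⟨hi, hR⟩ := Multiset.mem_filter.1 hi
      ⟨⟨π.1.parts_pos hi, hR.1⟩, hR.2⟩
    have hright : ∀ i ∈ π.1.parts.filter fun i => ¬(u ∣ i ∧ P (i / u)),
        (0 < i ∧ v ∣ i) ∧ Q (i / v) := fun i hi =>
      have hQ := Multiset.dvd_and_div_of_mem_filter_not hu hv π.2 hi
      ⟨⟨π.1.parts_pos (Multiset.mem_of_mem_filter hi), hQ.1⟩, hQ.2⟩
    let κ := (π.1.parts.filter fun i => u ∣ i ∧ P (i / u)).map (· / u)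
    let μ := (π.1.parts.filter fun i => ¬(u ∣ i ∧ P (i / u))).map (· / v)
    ⟨⟨(κ.sum, μ.sum), by
        rw [Multiset.mul_sum_map_div_cancel fun i hi => (hleft i hi).1.2,
          Multiset.mul_sum_map_div_cancel fun i hi => (hright i hi).1.2, ← Multiset.sum_add,
          Multiset.filter_add_not, π.1.parts_sum]⟩,
      ⟨_, divParts_mem_restricted hu (fun i hi => (hleft i hi).1) fun i hi => (hleft i hi).2⟩,
      ⟨_, divParts_mem_restricted hv (fun i hi => (hright i hi).1) fun i hi => (hright i hi).2⟩⟩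
  invFun x := ⟨⟨x.2.1.1.parts.map (u * ·) + x.2.2.1.parts.map (v * ·), by
      simp only [Multiset.mem_add, Multiset.mem_map]
      rintro _ (⟨y, hy, rfl⟩ | ⟨w, hw, rfl⟩)
      · exact Nat.mul_pos hu (x.2.1.1.parts_pos hy)
      · exact Nat.mul_pos hv (x.2.2.1.parts_pos hw), by
      rw [Multiset.sum_add, Multiset.sum_map_mul, Multiset.sum_map_mul, x.2.1.1.parts_sum,
        x.2.2.1.parts_sum, x.1.2]⟩,
    by
      simp only [Multiset.mem_add, Multiset.mem_map]
      rintro _ (⟨y, hy, rfl⟩ | ⟨w, hw, rfl⟩)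
      · exact .inl ⟨y, mem_restricted.1 x.2.1.2 y hy, rfl⟩
      · exact .inr ⟨w, mem_restricted.1 x.2.2.2 w hw, rfl⟩⟩
  left_inv π := by
    refine Subtype.ext <| Partition.ext ?_
    show Multiset.map _ (Multiset.map _ _) + Multiset.map _ (Multiset.map _ _) = _
    rw [Multiset.map_mul_map_div_cancel fun i hi => (Multiset.of_mem_filter hi).1,
      Multiset.map_mul_map_div_cancel fun i hi =>
        (Multiset.dvd_and_div_of_mem_filter_not hu hv π.2 hi).1,
      Multiset.filter_add_not]
  right_inv x := by
    have hκ := mem_restricted.1 x.2.1.2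
    have hμ := mem_restricted.1 x.2.2.2
    refine WeightedPair.ext (y := x) ?_ ?_
    · exact (congrArg _ (Multiset.filter_map_mul_add_map_mul hu hPQ hκ hμ)).trans
        (Multiset.map_div_map_mul_cancel hu _)
    · exact (congrArg _ (Multiset.filter_not_map_mul_add_map_mul hu hPQ hκ hμ)).trans
        (Multiset.map_div_map_mul_cancel hv _)

end Nat.Partition

open Nat.Partition in
/-- **Generalization of Subbarao's finitization.** Let `p, a` be positive coprime integers,
`r ≥ 0`, `m ≥ 1`. The number of partitions of `n` in which every multiplicity is congruent
to `j·a (mod p)` for some `0 ≤ j ≤ p - 1` and lies between `j(pr + a)` and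
`j(pr + a) + p(m - 1)` equals the number of partitions of `n` in which every part divisible
by `p` is not divisible by `pm`, and every part not divisible by `p` is congruent to
`-s(pr + a) (mod p²r + pa)` for some `s ∈ {1, …, p - 1}`. -/
theorem B_card_eq_E_card (p a r m : ℕ) (hp : 0 < p) (ha : 0 < a)
    (hco : Nat.gcd a p = 1) (hm : 1 ≤ m) (n : ℕ) :
    Nat.card {π : n.Partition //
      ∀ i ∈ π.parts, ∃ j, j ≤ p - 1 ∧
        π.parts.count i ≡ j * a [MOD p] ∧
        j * (p * r + a) ≤ π.parts.count i ∧
        π.parts.count i ≤ j * (p * r + a) + p * (m - 1)} =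
    Nat.card {π : n.Partition //
      ∀ i ∈ π.parts,
        (p ∣ i → ¬ (p * m ∣ i)) ∧
        (¬ p ∣ i → ∃ s, 1 ≤ s ∧ s ≤ p - 1 ∧
          (i : ℤ) ≡ -(s * (p * r + a)) [ZMOD ((p : ℤ) ^ 2 * r + p * a)])} := by
  have hL : 0 < p * r + a := by positivity
  have hLp : (p * r + a).Coprime p := (Nat.coprime_mul_left_add_left a p r).2 hco
  have hLa : p * r + a ≡ a [MOD p] := by simp [Nat.ModEq]
  calc _ = Nat.card {π : n.Partition //
          ∀ i ∈ π.parts, ∃ j < p, ∃ t < m, π.parts.count i = (p * r + a) * j + p * t} :=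
        Nat.card_congr <| Equiv.subtypeEquivRight fun π => forall₂_congr fun i _ =>
          exists_modEq_window_iff hp hm hLa _
    _ = Nat.card (WeightedPair (p * r + a) p n (countRestricted · p) (countRestricted · m)) :=
        Nat.card_congr (mixedCountEquiv hLp hp hm)
    _ = Nat.card (WeightedPair (p * r + a) p n (restricted · (¬p ∣ ·)) (restricted · (¬m ∣ ·))) :=
        card_weightedPair_congr (fun k => (card_restricted_eq_card_countRestricted k hp).symm)
          (fun l => (card_restricted_eq_card_countRestricted l hm).symm)
    _ = Nat.card {π : n.Partition // ∀ i ∈ π.parts,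
          (∃ y, ¬p ∣ y ∧ (p * r + a) * y = i) ∨ ∃ w, ¬m ∣ w ∧ p * w = i} :=
        (Nat.card_congr (scaledPartsEquiv hL hp fun y w hy _ h =>
          hy (hLp.symm.dvd_of_dvd_mul_left (h ▸ dvd_mul_right p w)))).symm
    _ = _ := Nat.card_congr <| Equiv.subtypeEquivRight fun π => forall₂_congr fun i _ =>
          (E_part_iff hp hLp i).symm
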